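/- Let D, D̂ be positive semidefinite symmetric on ℝ^m, λ > 0, δ, δ̂ ∈ ℝ^m. Set û = (D̂ + λI)⁻¹ δ̂ and u* = D⁻¹δ (assuming D invertible). Then |‖(D̂ + λI)^{-1/2} δ̂‖² − ‖D^{-1/2}δ‖²| ≤ 2‖δ − δ̂‖·‖û‖ + (1 + λ)‖û‖²·‖D − D̂‖_op + ‖D^{1/2}(û − u*)‖² + λ‖û‖². -/

import Mathlib

/-!
Write `A = D̂ + λI`, so that `δ̂ = A û` and `δ = D u*`. The inverse square roots turn the two
discrepancies into `⟪δ̂, û⟫` and `⟪δ, u*⟫`, and expanding with the symmetry of `D` gives the exact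
identity
`⟪δ̂, û⟫ - ⟪δ, u*⟫ = ⟪û, (D - D̂) û⟫ - 2⟪δ - δ̂, û⟫ - λ‖û‖² - ⟪û - u*, D (û - u*)⟫`.
Each term is then bounded separately: Cauchy–Schwarz for the second, the operator norm for the
first, and the last is `‖D^{1/2}(û - u*)‖²`.
-/

open Matrix

noncomputable def Matrix.PosSemidef.sqrt {n : Type*} [Fintype n] [DecidableEq n]
    {A : Matrix n n ℝ} (hA : A.PosSemidef) : Matrix n n ℝ :=
  hA.1.eigenvectorUnitary.1 * diagonal ((↑) ∘ (Real.sqrt ·) ∘ hA.1.eigenvalues) *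
    (star hA.1.eigenvectorUnitary : Matrix n n ℝ)

namespace Matrix

lemma IsHermitian.isSymm_of_real {n : Type*} {A : Matrix n n ℝ} (hA : A.IsHermitian) :
    A.IsSymm :=
  (conjTranspose_eq_transpose_of_trivial A).symm.trans hA

variable {n : Type*} [Fintype n]

section CommRing

variable {R : Type*} [CommRing R] [DecidableEq n]

lemma dotProduct_sub_dotProduct_eq_of_regularized {D Dh : Matrix n n R} (hD : D.IsSymm)
    {t : R} {δ δh u uh : n → R} (hδ : δ = D *ᵥ u) (hδh : δh = (Dh + t • 1) *ᵥ uh) :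
    δh ⬝ᵥ uh - δ ⬝ᵥ u = uh ⬝ᵥ (D - Dh) *ᵥ uh - 2 * ((δ - δh) ⬝ᵥ uh) - t * (uh ⬝ᵥ uh) -
      (uh - u) ⬝ᵥ D *ᵥ (uh - u) := by
  have hcross : u ⬝ᵥ D *ᵥ uh = uh ⬝ᵥ D *ᵥ u := by
    rw [dotProduct_mulVec, ← mulVec_transpose, hD.eq, dotProduct_comm]
  subst hδ hδh
  simp only [add_mulVec, sub_mulVec, smul_mulVec, one_mulVec, mulVec_sub, dotProduct_add,
    dotProduct_sub, dotProduct_smul, smul_eq_mul, dotProduct_comm]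
  linear_combination -hcross

end CommRing

section Real

lemma IsSymm.mulVec_dotProduct_mulVec_self {B : Matrix n n ℝ} (hB : B.IsSymm) (x : n → ℝ) :
    (B *ᵥ x) ⬝ᵥ (B *ᵥ x) = x ⬝ᵥ (B * B) *ᵥ x := by
  rw [← mulVec_mulVec, dotProduct_mulVec, ← mulVec_transpose, hB.eq, dotProduct_comm]

lemma norm_toLp_eq_sqrt_dotProduct (x : n → ℝ) : ‖WithLp.toLp 2 x‖ = √(x ⬝ᵥ x) := by
  rw [← Real.sqrt_sq (norm_nonneg _), ← real_inner_self_eq_norm_sq,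
    EuclideanSpace.inner_toLp_toLp, star_trivial]

lemma abs_dotProduct_le_sqrt_mul_sqrt (v w : n → ℝ) :
    |v ⬝ᵥ w| ≤ √(v ⬝ᵥ v) * √(w ⬝ᵥ w) := by
  have h := abs_real_inner_le_norm (WithLp.toLp 2 w) (WithLp.toLp 2 v)
  rwa [EuclideanSpace.inner_toLp_toLp, star_trivial, norm_toLp_eq_sqrt_dotProduct,
    norm_toLp_eq_sqrt_dotProduct, mul_comm] at h

lemma abs_dotProduct_mulVec_self_le [DecidableEq n] (M : Matrix n n ℝ) (x : n → ℝ) :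
    |x ⬝ᵥ M *ᵥ x| ≤ ‖toEuclideanCLM (𝕜 := ℝ) M‖ * (x ⬝ᵥ x) := by
  set y := WithLp.toLp 2 x
  set T := toEuclideanCLM (𝕜 := ℝ) M
  have hxx : x ⬝ᵥ x = ‖y‖ ^ 2 := by
    rw [← real_inner_self_eq_norm_sq, EuclideanSpace.inner_toLp_toLp, star_trivial]
  calc |x ⬝ᵥ M *ᵥ x| = |inner ℝ y (T y)| := by rw [inner_toEuclideanCLM]
    _ ≤ ‖y‖ * ‖T y‖ := abs_real_inner_le_norm y (T y)
    _ ≤ ‖y‖ * (‖T‖ * ‖y‖) := by gcongr; exact T.le_opNorm y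
    _ = ‖T‖ * (x ⬝ᵥ x) := by rw [hxx]; ring

end Real

namespace PosSemidef

variable [DecidableEq n] {A : Matrix n n ℝ} (hA : A.PosSemidef)
include hA

lemma isSymm_sqrt : hA.sqrt.IsSymm := by
  refine IsHermitian.isSymm_of_real ?_
  simp [PosSemidef.sqrt, IsHermitian, star_eq_conjTranspose, mul_assoc]

lemma sqrt_mul_self : hA.sqrt * hA.sqrt = A := by
  have hU : (star hA.1.eigenvectorUnitary : Matrix n n ℝ) * hA.1.eigenvectorUnitary.1 = 1 :=
    Unitary.coe_star_mul_self _
  have hdiag : diagonal (((↑) ∘ (Real.sqrt ·) ∘ hA.1.eigenvalues : n → ℝ)) *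
      diagonal (((↑) ∘ (Real.sqrt ·) ∘ hA.1.eigenvalues : n → ℝ)) =
        diagonal (RCLike.ofReal ∘ hA.1.eigenvalues) := by
    rw [diagonal_mul_diagonal]
    congr 1
    funext i
    simp [Real.mul_self_sqrt (hA.eigenvalues_nonneg i)]
  conv_rhs => rw [hA.1.spectral_theorem, Unitary.conjStarAlgAut_apply]
  simp only [PosSemidef.sqrt, mul_assoc]
  rw [← mul_assoc (star _ : Matrix n n ℝ), hU, one_mul, ← mul_assoc (diagonal _), hdiag]

lemma sqrt_mulVec_dotProduct_self (x : n → ℝ) :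
    (hA.sqrt *ᵥ x) ⬝ᵥ (hA.sqrt *ᵥ x) = x ⬝ᵥ A *ᵥ x := by
  rw [hA.isSymm_sqrt.mulVec_dotProduct_mulVec_self, hA.sqrt_mul_self]

lemma inv_sqrt_mulVec_dotProduct_self (x : n → ℝ) :
    (hA.sqrt⁻¹ *ᵥ x) ⬝ᵥ (hA.sqrt⁻¹ *ᵥ x) = x ⬝ᵥ A⁻¹ *ᵥ x := by
  have hsymm : hA.sqrt⁻¹.IsSymm := by
    rw [IsSymm, transpose_nonsing_inv, hA.isSymm_sqrt.eq]
  rw [hsymm.mulVec_dotProduct_mulVec_self, ← mul_inv_rev, hA.sqrt_mul_self]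

end PosSemidef

end Matrix

/-- Comparison inequality between the empirical regularized squared
kernel Sobolev discrepancy and the population unregularized one. -/
theorem comparison_inequality (m : ℕ) (D Dh : Matrix (Fin m) (Fin m) ℝ)
    (hD : D.PosDef) (hDh : Dh.PosSemidef) (t : ℝ) (ht : 0 < t)
    (δ δh : Fin m → ℝ)
    (hDht : (Dh + t • (1 : Matrix (Fin m) (Fin m) ℝ)).PosSemidef)
    (uh ustar : Fin m → ℝ)
    (huh : uh = (Dh + t • (1 : Matrix (Fin m) (Fin m) ℝ))⁻¹ *ᵥ δh)
    (hustar : ustar = D⁻¹ *ᵥ δ) :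
    |(hDht.sqrt⁻¹ *ᵥ δh) ⬝ᵥ (hDht.sqrt⁻¹ *ᵥ δh) -
        (hD.posSemidef.sqrt⁻¹ *ᵥ δ) ⬝ᵥ (hD.posSemidef.sqrt⁻¹ *ᵥ δ)| ≤
      2 * Real.sqrt ((δ - δh) ⬝ᵥ (δ - δh)) * Real.sqrt (uh ⬝ᵥ uh) +
      (1 + t) * (uh ⬝ᵥ uh) * ‖Matrix.toEuclideanCLM (𝕜 := ℝ) (D - Dh)‖ +
      (hD.posSemidef.sqrt *ᵥ (uh - ustar)) ⬝ᵥ (hD.posSemidef.sqrt *ᵥ (uh - ustar)) +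
      t * (uh ⬝ᵥ uh) := by
  have hA : (Dh + t • (1 : Matrix (Fin m) (Fin m) ℝ)).PosDef :=
    PosDef.posSemidef_add hDh (PosDef.one.smul ht)
  have hδh : δh = (Dh + t • 1) *ᵥ uh := by
    rw [huh, mulVec_mulVec, mul_nonsing_inv _ ((isUnit_iff_isUnit_det _).1 hA.isUnit), one_mulVec]
  have hδ : δ = D *ᵥ ustar := by
    rw [hustar, mulVec_mulVec, mul_nonsing_inv _ ((isUnit_iff_isUnit_det _).1 hD.isUnit),
      one_mulVec]
  rw [hDht.inv_sqrt_mulVec_dotProduct_self, hD.posSemidef.inv_sqrt_mulVec_dotProduct_self,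
    hD.posSemidef.sqrt_mulVec_dotProduct_self, ← huh, ← hustar,
    dotProduct_sub_dotProduct_eq_of_regularized hD.isHermitian.isSymm_of_real hδ hδh]
  have hcross := abs_le.1 (abs_dotProduct_le_sqrt_mul_sqrt (δ - δh) uh)
  have hpert := abs_le.1 (abs_dotProduct_mulVec_self_le (D - Dh) uh)
  have hE : 0 ≤ uh ⬝ᵥ uh := by simpa using dotProduct_star_self_nonneg uh
  have hS : 0 ≤ (uh - ustar) ⬝ᵥ D *ᵥ (uh - ustar) := by
    simpa only [star_trivial] using hD.posSemidef.dotProduct_mulVec_nonneg (uh - ustar)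
  have htE : 0 ≤ t * (uh ⬝ᵥ uh) := mul_nonneg ht.le hE
  have htEN : 0 ≤ t * (uh ⬝ᵥ uh) * ‖toEuclideanCLM (𝕜 := ℝ) (D - Dh)‖ :=
    mul_nonneg htE (norm_nonneg _)
  rw [abs_le]
  constructor <;> linarith
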